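/- arXiv:math-ph/0303031 — 2 statements merged into one kernel-verified Lean document; each statement's English description precedes it below -/
import Mathlib

section
/- A vector φ(p) = H_p ψ(p) ∈ ℂ² (with ψ(p) ∈ ℂ²) satisfies the momentum-space Weyl equation (p₀σ₀ − Σᵢ pᵢσᵢ) φ(p) = 0 if and only if the second component of ψ(p) vanishes, i.e., π ψ(p) = ψ(p) with π = diag(1,0). -/
open Matrix

/-- The matrix `H_p` associated to a point on the forward light cone with `p₀+p₃ > 0`. -/
noncomputable def Hp (p₀ p₁ p₂ p₃ : ℝ) : Matrix (Fin 2) (Fin 2) ℂ :=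
  ((Real.sqrt (2 * p₀ * (p₀ + p₃)) : ℂ))⁻¹ •
    !![-(Real.sqrt p₀ : ℂ) * ((p₀ : ℂ) + (p₃ : ℂ)),
        ((p₁ : ℂ) - Complex.I * (p₂ : ℂ)) / (Real.sqrt p₀ : ℂ);
       -(Real.sqrt p₀ : ℂ) * ((p₁ : ℂ) + Complex.I * (p₂ : ℂ)),
        -((p₀ : ℂ) + (p₃ : ℂ)) / (Real.sqrt p₀ : ℂ)]

/-- The Weyl operator in momentum space, `W(p) = p₀σ₀ − Σᵢ pᵢσᵢ`. -/
noncomputable def WeylOp (p₀ p₁ p₂ p₃ : ℝ) : Matrix (Fin 2) (Fin 2) ℂ :=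
  !![(p₀ : ℂ) - (p₃ : ℂ), -((p₁ : ℂ) - Complex.I * (p₂ : ℂ));
     -((p₁ : ℂ) + Complex.I * (p₂ : ℂ)), (p₀ : ℂ) + (p₃ : ℂ)]

/-- Auxiliary computation: `W(p) (s⁻¹ • M) ψ` has both components proportional to `ψ 1`. -/
lemma weyl_mulVec_Hp (p₀ p₁ p₂ p₃ : ℝ) (a s : ℂ) (ha : a ≠ 0) (hs : s ≠ 0)
    (hcone' : (p₀:ℂ)^2 = (p₁:ℂ)^2 + (p₂:ℂ)^2 + (p₃:ℂ)^2)
    (ψ : Fin 2 → ℂ) :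
    (WeylOp p₀ p₁ p₂ p₃).mulVec ((s⁻¹ •
    !![-a * ((p₀ : ℂ) + (p₃ : ℂ)),
        ((p₁ : ℂ) - Complex.I * (p₂ : ℂ)) / a;
       -a * ((p₁ : ℂ) + Complex.I * (p₂ : ℂ)),
        -((p₀ : ℂ) + (p₃ : ℂ)) / a]).mulVec ψ) =
      fun i => s⁻¹ * (2 * p₀ / a) *
        (![ (p₁ : ℂ) - Complex.I * p₂, -((p₀:ℂ) + p₃)] i) * ψ 1 := by
  funext i
  fin_cases i <;>
    simp [WeylOp, mulVec, dotProduct, Fin.sum_univ_two] <;>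
    field_simp <;>
    first
    | linear_combination (-(a^2 * ψ 0 * (p₂:ℂ)^2)) * Complex.I_sq + (-(a^2 * ψ 0)) * hcone'
    | linear_combination (ψ 1 * (p₂:ℂ)^2) * Complex.I_sq + (ψ 1) * hcone'

/-- `φ = H_p ψ` satisfies the momentum-space Weyl equation `W(p) φ = 0` iff
`π ψ = ψ` with `π = diag(1,0)`, i.e. the second component of `ψ` vanishes. -/
theorem weyl_equation_iff_projection (p₀ p₁ p₂ p₃ : ℝ)
    (hpos : 0 < p₀) (hcone : p₀ ^ 2 = p₁ ^ 2 + p₂ ^ 2 + p₃ ^ 2) (h3 : 0 < p₀ + p₃)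
    (ψ : Fin 2 → ℂ) :
    (WeylOp p₀ p₁ p₂ p₃).mulVec ((Hp p₀ p₁ p₂ p₃).mulVec ψ) = 0 ↔
      (!![(1 : ℂ), 0; 0, 0]).mulVec ψ = ψ := by
  have hr : (0:ℝ) < Real.sqrt p₀ := Real.sqrt_pos.2 hpos
  have hrc : (Real.sqrt p₀ : ℂ) ≠ 0 := by exact_mod_cast hr.ne'
  have hs : (0:ℝ) < Real.sqrt (2 * p₀ * (p₀ + p₃)) := Real.sqrt_pos.2 (by positivity)
  have hsc : ((Real.sqrt (2 * p₀ * (p₀ + p₃)) : ℝ) : ℂ) ≠ 0 := by exact_mod_cast hs.ne'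
  have hcone' : (p₀:ℂ)^2 = (p₁:ℂ)^2 + (p₂:ℂ)^2 + (p₃:ℂ)^2 := by exact_mod_cast hcone
  have h03 : ((p₀:ℂ) + p₃) ≠ 0 := by
    have : (0:ℝ) < p₀ + p₃ := h3
    exact_mod_cast this.ne'
  have h0 : (p₀:ℂ) ≠ 0 := by exact_mod_cast hpos.ne'
  rw [Hp, weyl_mulVec_Hp p₀ p₁ p₂ p₃ _ _ hrc hsc hcone' ψ]
  have hfac : ((Real.sqrt (2 * p₀ * (p₀ + p₃)) : ℝ) : ℂ)⁻¹ * (2 * (p₀:ℂ) / (Real.sqrt p₀ : ℂ)) ≠ 0 := by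
    apply mul_ne_zero (inv_ne_zero hsc)
    exact div_ne_zero (by simpa using h0) hrc
  constructor
  · intro h
    have h1 := congrFun h 1
    simp only [Matrix.cons_val_one, Matrix.head_cons, Pi.zero_apply] at h1
    have hψ1 : ψ 1 = 0 := by
      rcases mul_eq_zero.mp h1 with h' | h'
      · rcases mul_eq_zero.mp h' with h'' | h''
        · exact absurd h'' hfac
        · exact absurd (by simp only [Matrix.cons_val_zero] at h''; linear_combination -h'') h03
      · exact h'
    funext i
    fin_cases i <;> simp [mulVec, dotProduct, Fin.sum_univ_two, hψ1]
  · intro h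
    have hψ1 : ψ 1 = 0 := by
      have := congrFun h 1
      simpa [mulVec, dotProduct, Fin.sum_univ_two] using this.symm
    funext i
    fin_cases i <;> simp [hψ1]
end

section
/- Let D: G → GL(H) be a representation of a group G on a finite-dimensional Hilbert space, π an orthogonal projection with π D(g) π = D(g) π and π D(g)* D(g) π = π for all g ∈ G, and let V be the induced action on H-valued L² functions given by (V(g)φ)(p) = c(g,p) D(k(g,p)) φ(g⁻¹·p) where k(g,p) ∈ G and |c(g,p)| = 1, with the measure invariant under the G-action. Then the subspace h̃ = {φ : π φ(p) = φ(p) a.e.} is V-invariant, and V(g) restricted to h̃ is unitary. -/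
open MeasureTheory

/-- Abstract version of Theorem 3.5 of the paper: let `D` be a (not necessarily unitary)
representation of a group `G` on a finite-dimensional Hilbert space `H`, `π` an orthogonal
projection which is invariant (`π D(g) π = D(g) π`) and normalized
(`π D(g)* D(g) π = π`), and let `V` be the induced action
`(V(g)φ)(p) = c(g,p) • D(k(g,p)) φ(g⁻¹·p)` on `H`-valued `L²` functions, with `|c(g,p)| = 1`
and the measure invariant under the `G`-action.  Then the subspace
`h̃ = {φ : π φ(p) = φ(p) a.e.}` is `V`-invariant and `V(g)` is unitary on it. -/
theorem induced_rep_invariant_subspace_unitary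
    {G : Type*} [Group G]
    {H : Type*} [NormedAddCommGroup H] [InnerProductSpace ℂ H] [FiniteDimensional ℂ H]
    {Ω : Type*} [MeasurableSpace Ω] (μ : Measure Ω)
    (D : G → (H →ₗ[ℂ] H)) (π : H →ₗ[ℂ] H)
    (hπ2 : π ∘ₗ π = π) (hπadj : LinearMap.adjoint π = π)
    (hinv : ∀ g : G, π ∘ₗ D g ∘ₗ π = D g ∘ₗ π)
    (hnorm : ∀ g : G, π ∘ₗ LinearMap.adjoint (D g) ∘ₗ D g ∘ₗ π = π)
    (a : G → Ω → Ω) (ha : ∀ g : G, MeasurePreserving (a g) μ μ)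
    (hainv : ∀ (g : G) (p : Ω), a g (a g⁻¹ p) = p)
    (k : G → Ω → G) (c : G → Ω → ℂ) (hc : ∀ (g : G) (p : Ω), ‖c g p‖ = 1)
    (V : G → (Ω → H) → (Ω → H))
    (hV : ∀ (g : G) (φ : Ω → H) (p : Ω), V g φ p = c g p • D (k g p) (φ (a g⁻¹ p)))
    (φ ψ : Ω → H)
    (hφ : ∀ᵐ p ∂μ, π (φ p) = φ p) (hψ : ∀ᵐ p ∂μ, π (ψ p) = ψ p) (g : G) :
    (∀ᵐ p ∂μ, π (V g φ p) = V g φ p) ∧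
    ∫ p, (inner ℂ (V g φ p) (V g ψ p) : ℂ) ∂μ = ∫ p, (inner ℂ (φ p) (ψ p) : ℂ) ∂μ := by
  -- transfer a.e. statements along a g⁻¹
  have hφ' : ∀ᵐ p ∂μ, π (φ (a g⁻¹ p)) = φ (a g⁻¹ p) :=
    ((ha g⁻¹).quasiMeasurePreserving.tendsto_ae).eventually hφ
  have hψ' : ∀ᵐ p ∂μ, π (ψ (a g⁻¹ p)) = ψ (a g⁻¹ p) :=
    ((ha g⁻¹).quasiMeasurePreserving.tendsto_ae).eventually hψ
  -- pointwise algebra lemmas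
  have hDinv : ∀ (g' : G) (x : H), π x = x → π (D g' x) = D g' x := by
    intro g' x hx
    have := congrArg (fun T => T x) (hinv g')
    simpa [LinearMap.comp_apply, hx] using this
  have hDinner : ∀ (g' : G) (x y : H), π x = x → π y = y →
      (inner ℂ (D g' x) (D g' y) : ℂ) = inner ℂ x y := by
    intro g' x y hx hy
    have h1 : (inner ℂ (D g' x) (D g' y) : ℂ) = inner ℂ x (LinearMap.adjoint (D g') (D g' y)) :=
      (LinearMap.adjoint_inner_right (D g') _ _).symm
    have h2 : (inner ℂ x (LinearMap.adjoint (D g') (D g' y)) : ℂ)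
        = inner ℂ x (π (LinearMap.adjoint (D g') (D g' y))) := by
      conv_lhs => rw [← hx]
      rw [← hπadj, LinearMap.adjoint_inner_left, hπadj]
    have h3 : π (LinearMap.adjoint (D g') (D g' y)) = y := by
      have := congrArg (fun T => T y) (hnorm g')
      simpa [LinearMap.comp_apply, hy] using this
    rw [h1, h2, h3]
  constructor
  · filter_upwards [hφ'] with p hp
    rw [hV]
    have := hDinv (k g p) _ hp
    simp [this]
  · let e : Ω ≃ᵐ Ω :=
      { toFun := a g⁻¹
        invFun := a g
        left_inv := fun p => hainv g p
        right_inv := fun p => by simpa using hainv g⁻¹ p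
        measurable_toFun := (ha g⁻¹).measurable
        measurable_invFun := (ha g).measurable }
    have heq : ∀ᵐ p ∂μ, (inner ℂ (V g φ p) (V g ψ p) : ℂ)
        = inner ℂ (φ (a g⁻¹ p)) (ψ (a g⁻¹ p)) := by
      filter_upwards [hφ', hψ'] with p hp hq
      rw [hV, hV, inner_smul_left, inner_smul_right, hDinner _ _ _ hp hq, ← mul_assoc]
      have : (starRingEnd ℂ) (c g p) * c g p = 1 := by
        rw [Complex.conj_mul']
        norm_cast
        simp [Complex.sq_norm, Complex.normSq_eq_norm_sq, hc g p]
      rw [this, one_mul]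
    rw [integral_congr_ae heq]
    have he : MeasurableEmbedding (a g⁻¹) := e.measurableEmbedding
    exact (ha g⁻¹).integral_comp he (fun p => (inner ℂ (φ p) (ψ p) : ℂ))
end
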